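/- arXiv:1801.07389 — 3 statements merged into one kernel-verified Lean document; each statement's English description precedes it below -/
import Mathlib

section
/- Let (t_k)_{k≥0} be a sequence of nonnegative real numbers and (β_k)_{k≥0} a non-increasing sequence of nonnegative real numbers with Σ_k β_k < +∞. If t_{k+1} ≤ (1+β_k) t_k + β_k t_{k−1} for every k ≥ 1, then the sequence (t_k)_{k≥0} is bounded. -/
/-!
Pass to the running maximum `m k = max (t k) (t (k+1))`: the two-step recurrence gives the
one-step bound `m (k+1) ≤ (1 + 2 β (k+1)) m k`. Since `1 + x ≤ exp x`, iterating yields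
`m k ≤ m 0 · exp (2 ∑ β)`, which is finite by summability.
-/

open Finset Real

theorem le_mul_exp_sum_of_le_one_add_mul {u a : ℕ → ℝ} (hu : ∀ k, 0 ≤ u k)
    (h : ∀ k, u (k + 1) ≤ (1 + a k) * u k) (n : ℕ) :
    u n ≤ u 0 * exp (∑ k ∈ range n, a k) := by
  induction n with
  | zero => simp
  | succ n ih =>
    calc u (n + 1) ≤ (1 + a n) * u n := h n
      _ ≤ exp (a n) * u n := by
        gcongr
        · exact hu n
        · linarith [add_one_le_exp (a n)]
      _ ≤ exp (a n) * (u 0 * exp (∑ k ∈ range n, a k)) := by gcongr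
      _ = u 0 * exp (∑ k ∈ range (n + 1), a k) := by
        rw [sum_range_succ, exp_add]; ring

theorem le_mul_exp_tsum_of_le_one_add_mul {u a : ℕ → ℝ} (hu : ∀ k, 0 ≤ u k)
    (ha : ∀ k, 0 ≤ a k) (ha_sum : Summable a) (h : ∀ k, u (k + 1) ≤ (1 + a k) * u k) (n : ℕ) :
    u n ≤ u 0 * exp (∑' k, a k) :=
  (le_mul_exp_sum_of_le_one_add_mul hu h n).trans <| by
    gcongr
    · exact hu 0
    · exact ha_sum.sum_le_tsum _ fun k _ => ha k

theorem max_succ_le_of_le_one_add_mul_add_mul {t : ℕ → ℝ} {b : ℝ} {k : ℕ} (htk : 0 ≤ t k)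
    (hb : 0 ≤ b) (hrec : t (k + 2) ≤ (1 + b) * t (k + 1) + b * t k) :
    max (t (k + 1)) (t (k + 2)) ≤ (1 + 2 * b) * max (t k) (t (k + 1)) := by
  have hk : t k ≤ max (t k) (t (k + 1)) := le_max_left _ _
  have hk1 : t (k + 1) ≤ max (t k) (t (k + 1)) := le_max_right _ _
  have hm : 0 ≤ max (t k) (t (k + 1)) := htk.trans hk
  refine max_le ?_ ?_ <;> nlinarith

theorem pigd_stmt0_general
    (t β : ℕ → ℝ)
    (ht : ∀ k, 0 ≤ t k)
    (hβnonneg : ∀ k, 0 ≤ β k)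
    (hβsum : Summable β)
    (hrec : ∀ k, 1 ≤ k → t (k + 1) ≤ (1 + β k) * t k + β k * t (k - 1)) :
    ∃ M : ℝ, ∀ k, t k ≤ M := by
  set m : ℕ → ℝ := fun k => max (t k) (t (k + 1))
  have hm_step : ∀ k, m (k + 1) ≤ (1 + 2 * β (k + 1)) * m k := fun k =>
    max_succ_le_of_le_one_add_mul_add_mul (ht k) (hβnonneg (k + 1)) (hrec (k + 1) k.succ_pos)
  have hsum : Summable fun k => 2 * β (k + 1) :=
    ((summable_nat_add_iff 1).mpr hβsum).mul_left 2
  refine ⟨m 0 * exp (∑' k, 2 * β (k + 1)), fun k => (le_max_left (t k) (t (k + 1))).trans ?_⟩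
  exact le_mul_exp_tsum_of_le_one_add_mul (u := m) (fun k => (ht k).trans (le_max_left _ _))
    (fun k => by linarith [hβnonneg (k + 1)]) hsum hm_step k

/-- Lemma 2 of the paper. Let `(t k)` be a nonnegative real sequence and
`(β k)` a non-increasing nonnegative summable sequence. If
`t (k+1) ≤ (1 + β k) * t k + β k * t (k-1)` for every `k ≥ 1`, then `(t k)` is bounded. -/
theorem pigd_stmt0
    (t β : ℕ → ℝ)
    (ht : ∀ k, 0 ≤ t k)
    (hβnonneg : ∀ k, 0 ≤ β k)
    (hβmono : ∀ k, β (k + 1) ≤ β k)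
    (hβsum : Summable β)
    (hrec : ∀ k, 1 ≤ k → t (k + 1) ≤ (1 + β k) * t k + β k * t (k - 1)) :
    ∃ M : ℝ, ∀ k, t k ≤ M :=
  pigd_stmt0_general t β ht hβnonneg hβsum hrec
end

section
/- Under the PIGD setup, for every k ≥ 0 the following descent inequality holds: [F(x^k) + (β_k/(2γ_k))‖x^k − x^{k−1}‖²] − [F(x^{k+1}) + (β_{k+1}/(2γ_{k+1}))‖x^{k+1} − x^k‖²] ≥ ((1−β_k)/γ_k − L/2)·‖x^{k+1} − x^k‖². -/
/-!
Add the descent lemma for the `L`-smooth part `f` (between `xᵏ` and `xᵏ⁺¹`) to the subgradient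
inequality of `g` at the prox point `xᵏ⁺¹`, tested at `xᵏ`. The only term not yet of the right
form is the inertial cross term `(βₖ/γₖ)⟪xᵏ − xᵏ⁻¹, xᵏ⁺¹ − xᵏ⟫`, which Young's inequality splits
into the two weighted squares. Finally `β/(2γ) = Lβ / (4c(1 − β))` is nondecreasing in `β`, so the
weight of `‖xᵏ⁺¹ − xᵏ‖²` may be lowered from `βₖ/(2γₖ)` to `βₖ₊₁/(2γₖ₊₁)`.
-/

open Set Filter Topology RealInnerProductSpace

lemma nonneg_of_forall_nonneg_add_mul {A B : ℝ} (h : ∀ t : ℝ, 0 < t → t ≤ 1 → 0 ≤ A + t * B) :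
    0 ≤ A := by
  have hlim : Tendsto (fun t : ℝ => A + t * B) (𝓝[>] 0) (𝓝 A) := by
    have : Tendsto (fun t : ℝ => A + t * B) (𝓝 0) (𝓝 (A + 0 * B)) :=
      tendsto_const_nhds.add (tendsto_id.mul_const B)
    simpa using this.mono_left nhdsWithin_le_nhds
  refine ge_of_tendsto hlim ?_
  filter_upwards [Ioc_mem_nhdsGT zero_lt_one] with t ht using h t ht.1 ht.2

section

variable {E : Type*} [NormedAddCommGroup E] [InnerProductSpace ℝ E]

/-- The prox point `u` of `y` satisfies `(y - u) / γ ∈ ∂g(u)`. -/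
lemma ConvexOn.inner_div_le_sub_of_isMinOn_prox {g : E → ℝ} (hg : ConvexOn ℝ univ g)
    {γ : ℝ} (hγ : 0 < γ) {y u : E}
    (hu : IsMinOn (fun z => ‖z - y‖ ^ 2 / (2 * γ) + g z) univ u) (z : E) :
    ⟪y - u, z - u⟫ / γ ≤ g z - g u := by
  suffices 0 ≤ ⟪u - y, z - u⟫ / γ + (g z - g u) by
    rw [← neg_sub u y, inner_neg_left, neg_div]; linarith
  refine nonneg_of_forall_nonneg_add_mul (B := ‖z - u‖ ^ 2 / (2 * γ)) fun t ht0 ht1 => ?_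
  have hmin : ‖u - y‖ ^ 2 / (2 * γ) + g u ≤ ‖u + t • (z - u) - y‖ ^ 2 / (2 * γ)
      + g (u + t • (z - u)) := hu (mem_univ _)
  have hsq : ‖u + t • (z - u) - y‖ ^ 2
      = ‖u - y‖ ^ 2 + 2 * t * ⟪u - y, z - u⟫ + t ^ 2 * ‖z - u‖ ^ 2 := by
    rw [show u + t • (z - u) - y = (u - y) + t • (z - u) by abel, norm_add_sq_real,
      real_inner_smul_right, norm_smul, mul_pow, Real.norm_eq_abs, sq_abs]
    ring
  have hconv : g (u + t • (z - u)) ≤ (1 - t) * g u + t * g z := by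
    rw [show u + t • (z - u) = (1 - t) • u + t • z by module]
    exact hg.2 (mem_univ u) (mem_univ z) (by linarith) ht0.le (by ring)
  have key : 0 ≤ t * (⟪u - y, z - u⟫ / γ + (g z - g u) + t * (‖z - u‖ ^ 2 / (2 * γ))) := by
    rw [hsq] at hmin
    have : t * (⟪u - y, z - u⟫ / γ + (g z - g u) + t * (‖z - u‖ ^ 2 / (2 * γ)))
        = (‖u - y‖ ^ 2 + 2 * t * ⟪u - y, z - u⟫ + t ^ 2 * ‖z - u‖ ^ 2) / (2 * γ)
          + ((1 - t) * g u + t * g z) - (‖u - y‖ ^ 2 / (2 * γ) + g u) := by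
      field_simp; ring
    linarith
  exact nonneg_of_mul_nonneg_right key ht0

end

section

variable {E : Type*} [NormedAddCommGroup E] [InnerProductSpace ℝ E] [CompleteSpace E]
  {f : E → ℝ} {f' : E → E} {L : ℝ}

lemma le_add_inner_add_sq_of_lipschitz_gradient (hf : ∀ x, HasGradientAt f (f' x) x)
    (hlip : ∀ x y, ‖f' x - f' y‖ ≤ L * ‖x - y‖) (x y : E) :
    f y ≤ f x + ⟪f' x, y - x⟫ + L / 2 * ‖y - x‖ ^ 2 := by
  set d := y - x
  set φ : ℝ → ℝ := fun t => f (x + t • d) - t * ⟪f' x, d⟫ - L / 2 * t ^ 2 * ‖d‖ ^ 2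
  have hφ : ∀ t, HasDerivAt φ (⟪f' (x + t • d) - f' x, d⟫ - L * t * ‖d‖ ^ 2) t := by
    intro t
    have hline : HasDerivAt (fun t : ℝ => x + t • d) d t := by
      simpa using ((hasDerivAt_id t).smul_const d).const_add x
    have := (((hf (x + t • d)).hasFDerivAt.comp_hasDerivAt t hline).sub
      ((hasDerivAt_id t).mul_const ⟪f' x, d⟫)).sub
      (((hasDerivAt_pow 2 t).const_mul (L / 2)).mul_const (‖d‖ ^ 2))
    refine this.congr_deriv ?_
    rw [InnerProductSpace.toDual_apply_apply, inner_sub_left]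
    ring
  have hφ' : ∀ t ∈ interior (Icc (0 : ℝ) 1), deriv φ t ≤ 0 := by
    intro t ht
    rw [interior_Icc] at ht
    rw [(hφ t).deriv, sub_nonpos]
    calc ⟪f' (x + t • d) - f' x, d⟫ ≤ ‖f' (x + t • d) - f' x‖ * ‖d‖ := real_inner_le_norm _ _
      _ ≤ L * ‖t • d‖ * ‖d‖ := by
        gcongr
        simpa using hlip (x + t • d) x
      _ = L * t * ‖d‖ ^ 2 := by rw [norm_smul, Real.norm_of_nonneg ht.1.le]; ring
  have hdiff : Differentiable ℝ φ := fun t => (hφ t).differentiableAt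
  have := antitoneOn_of_deriv_nonpos (convex_Icc 0 1) hdiff.continuous.continuousOn
    hdiff.differentiableOn hφ' (left_mem_Icc.2 zero_le_one) (right_mem_Icc.2 zero_le_one)
    zero_le_one
  simp only [φ, d, zero_smul, add_zero, one_smul, add_sub_cancel] at this
  linarith

end

lemma inertial_prox_grad_step_descent {E : Type*} [NormedAddCommGroup E] [InnerProductSpace ℝ E]
    [CompleteSpace E] {f g : E → ℝ} {f' : E → E} {L β γ : ℝ}
    (hf : ∀ x, HasGradientAt f (f' x) x) (hlip : ∀ x y, ‖f' x - f' y‖ ≤ L * ‖x - y‖)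
    (hg : ConvexOn ℝ univ g) (hβ : 0 ≤ β) (hγ : 0 < γ) {x₀ x₁ u : E}
    (hu : IsMinOn (fun z => ‖z - (x₁ - γ • f' x₁ + β • (x₁ - x₀))‖ ^ 2 / (2 * γ) + g z) univ u) :
    ((1 - β) / γ - L / 2) * ‖u - x₁‖ ^ 2 ≤
      (f x₁ + g x₁ + β / (2 * γ) * ‖x₁ - x₀‖ ^ 2) - (f u + g u + β / (2 * γ) * ‖u - x₁‖ ^ 2) := by
  set d := u - x₁
  set δ := x₁ - x₀
  have hprox := hg.inner_div_le_sub_of_isMinOn_prox hγ hu x₁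
  have hinner : ⟪x₁ - γ • f' x₁ + β • δ - u, x₁ - u⟫
      = ‖d‖ ^ 2 + γ * ⟪f' x₁, d⟫ - β * ⟪δ, d⟫ := by
    rw [show x₁ - γ • f' x₁ + β • δ - u = -d - γ • f' x₁ + β • δ by simp only [d]; abel,
      show x₁ - u = -d by simp only [d]; abel]
    simp only [inner_add_left, inner_sub_left, inner_neg_left, inner_neg_right, inner_smul_left,
      real_inner_self_eq_norm_sq, RCLike.conj_to_real]
    ring
  rw [hinner, sub_div, add_div, mul_div_cancel_left₀ _ hγ.ne'] at hprox
  have hdescent : f u ≤ f x₁ + ⟪f' x₁, d⟫ + L / 2 * ‖d‖ ^ 2 :=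
    le_add_inner_add_sq_of_lipschitz_gradient hf hlip x₁ u
  have hamgm : β / γ * ⟪δ, d⟫ ≤ β / γ * ((‖δ‖ ^ 2 + ‖d‖ ^ 2) / 2) := by
    gcongr
    nlinarith [real_inner_le_norm δ d, sq_nonneg (‖δ‖ - ‖d‖)]
  linear_combination hprox + hdescent + hamgm

lemma inertial_weight_le {L c β β' : ℝ} (hL : 0 < L) (hc : 0 < c) (hβ' : β' ≤ β) (hβ : β < 1) :
    β' / (2 * (2 * (1 - β') * c / L)) ≤ β / (2 * (2 * (1 - β) * c / L)) := by
  have key : ∀ b : ℝ, b < 1 →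
      b / (2 * (2 * (1 - b) * c / L)) = L / (4 * c) * (1 / (1 - b) - 1) := by
    intro b hb
    have : 1 - b ≠ 0 := by linarith
    field_simp
    ring
  rw [key β' (hβ'.trans_lt hβ), key β hβ]
  gcongr

theorem pigd_stmt1_general
    {n : ℕ} (f g F : EuclideanSpace ℝ (Fin n) → ℝ)
    (f' : EuclideanSpace ℝ (Fin n) → EuclideanSpace ℝ (Fin n))
    (L c : ℝ) (hL : 0 < L) (hc0 : 0 < c)
    (hgconv : ConvexOn ℝ Set.univ g)
    (hf' : ∀ x, HasGradientAt f (f' x) x)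
    (hlip : ∀ x y, ‖f' x - f' y‖ ≤ L * ‖x - y‖)
    (hF : ∀ x, F x = f x + g x)
    (β γ : ℕ → ℝ)
    (hβnonneg : ∀ k, 0 ≤ β k) (hβlt : ∀ k, β k < 1)
    (hβmono : ∀ k, β (k + 1) ≤ β k)
    (hγ : ∀ k, γ k = 2 * (1 - β k) * c / L)
    (prox : ℝ → EuclideanSpace ℝ (Fin n) → EuclideanSpace ℝ (Fin n))
    (hprox : ∀ (γ' : ℝ) (y : EuclideanSpace ℝ (Fin n)), 0 < γ' →
      IsMinOn (fun z => ‖z - y‖ ^ 2 / (2 * γ') + g z) Set.univ (prox γ' y))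
    (x : ℤ → EuclideanSpace ℝ (Fin n))
    (hiter : ∀ k : ℕ,
      x (k + 1) = prox (γ k) (x k - γ k • f' (x k) + β k • (x k - x ((k : ℤ) - 1)))) :
    ∀ k : ℕ,
      (F (x k) + β k / (2 * γ k) * ‖x k - x ((k : ℤ) - 1)‖ ^ 2)
        - (F (x (k + 1)) + β (k + 1) / (2 * γ (k + 1)) * ‖x (k + 1) - x k‖ ^ 2)
      ≥ ((1 - β k) / γ k - L / 2) * ‖x (k + 1) - x k‖ ^ 2 := by
  intro k
  have hγpos : 0 < γ k := by
    rw [hγ k]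
    have := sub_pos.2 (hβlt k)
    positivity
  have hstep := inertial_prox_grad_step_descent hf' hlip hgconv (hβnonneg k) hγpos
    (hiter k ▸ hprox _ _ hγpos)
  have hweight : β (k + 1) / (2 * γ (k + 1)) ≤ β k / (2 * γ k) := by
    rw [hγ, hγ]
    exact inertial_weight_le hL hc0 (hβmono k) (hβlt k)
  rw [hF, hF, ge_iff_le]
  linarith [mul_le_mul_of_nonneg_right hweight (sq_nonneg ‖x (k + 1) - x k‖)]

/-- Lemma 4, descent inequality for PIGD. Under the PIGD setup, for every
`k ≥ 0`,
`[F(xᵏ) + (βₖ/(2γₖ))‖xᵏ − xᵏ⁻¹‖²] − [F(xᵏ⁺¹) + (βₖ₊₁/(2γₖ₊₁))‖xᵏ⁺¹ − xᵏ‖²]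
  ≥ ((1−βₖ)/γₖ − L/2)‖xᵏ⁺¹ − xᵏ‖²`. -/
theorem pigd_stmt1
    {n : ℕ} (f g F : EuclideanSpace ℝ (Fin n) → ℝ)
    (f' : EuclideanSpace ℝ (Fin n) → EuclideanSpace ℝ (Fin n))
    (L c : ℝ) (hL : 0 < L) (hc0 : 0 < c) (hc1 : c < 1)
    (hfconv : ConvexOn ℝ Set.univ f)
    (hgconv : ConvexOn ℝ Set.univ g)
    (hgcont : Continuous g)
    (hf' : ∀ x, HasGradientAt f (f' x) x)
    (hlip : ∀ x y, ‖f' x - f' y‖ ≤ L * ‖x - y‖)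
    (hF : ∀ x, F x = f x + g x)
    (hFbdd : BddBelow (Set.range F))
    (β γ : ℕ → ℝ)
    (hβnonneg : ∀ k, 0 ≤ β k) (hβlt : ∀ k, β k < 1)
    (hβmono : ∀ k, β (k + 1) ≤ β k)
    (hγ : ∀ k, γ k = 2 * (1 - β k) * c / L)
    (prox : ℝ → EuclideanSpace ℝ (Fin n) → EuclideanSpace ℝ (Fin n))
    (hprox : ∀ (γ' : ℝ) (y : EuclideanSpace ℝ (Fin n)), 0 < γ' →
      IsMinOn (fun z => ‖z - y‖ ^ 2 / (2 * γ') + g z) Set.univ (prox γ' y))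
    (x : ℤ → EuclideanSpace ℝ (Fin n))
    (hiter : ∀ k : ℕ,
      x (k + 1) = prox (γ k) (x k - γ k • f' (x k) + β k • (x k - x ((k : ℤ) - 1)))) :
    ∀ k : ℕ,
      (F (x k) + β k / (2 * γ k) * ‖x k - x ((k : ℤ) - 1)‖ ^ 2)
        - (F (x (k + 1)) + β (k + 1) / (2 * γ (k + 1)) * ‖x (k + 1) - x k‖ ^ 2)
      ≥ ((1 - β k) / γ k - L / 2) * ‖x (k + 1) - x k‖ ^ 2 :=
  pigd_stmt1_general f g F f' L c hL hc0 hgconv hf' hlip hF β γ hβnonneg hβlt hβmono hγ prox hprox x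
    hiter
end

section
/- Under the PIGD setup, assume additionally that argmin F is nonempty and that the inertial parameters are β_k = 1/(k+1)^θ for some θ > 1. Then the sequence (x^k)_{k≥0} generated by PIGD is bounded. -/
/-!
A PIGD step with positive stepsize satisfies, for every `z`, the three-point inequality
`PIGDInequality`, which combines the descent lemma and the gradient inequality for `f` with the
variational inequality of the proximal step for `g`. Since `β_k → 0`, from some index `K` on
`β_k ≤ (1 - c) / 2`. Taking `z = x^k` shows that `F (x^k) + A/2 ‖x^k - x^{k-1}‖²`, with
`A = L (1 - c) / (2c)`, decreases by at least `A/2 ‖x^{k+1} - x^k‖²`, so the squared steps have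
bounded partial sums. Taking `z = x*` gives the quasi-Fejér inequality
`‖x^{k+1} - x*‖² ≤ (1 + 2β_k) ‖x^k - x*‖² + e_k` with `∑ e_k < ∞`; since `∑ β_k < ∞` (this is
where `θ > 1` enters), `‖x^k - x*‖²` stays below `exp (2 ∑ β) (‖x^K - x*‖² + ∑ e)`.
Only steps with `γ_k > 0` are used: `β_0 = 1` forces `γ_0 = 0`, where the prox is undetermined.
-/

open Filter Finset
open scoped RealInnerProductSpace Topology

theorem le_of_forall_le_add_mul {a b C : ℝ} (h : ∀ t ∈ Set.Ioc (0 : ℝ) 1, a ≤ b + t * C) :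
    a ≤ b := by
  have hlim : Tendsto (fun t : ℝ => b + t * C) (𝓝[>] 0) (𝓝 b) := by
    refine Tendsto.mono_left ?_ nhdsWithin_le_nhds
    exact (by fun_prop : Continuous fun t : ℝ => b + t * C).tendsto' 0 b (by simp)
  refine ge_of_tendsto hlim ?_
  filter_upwards [Ioc_mem_nhdsGT zero_lt_one] using h

section RealSequences

variable {u s : ℕ → ℝ} {K N : ℕ}

theorem add_sum_Ico_le_of_add_le (h : ∀ k ≥ K, u (k + 1) + s k ≤ u k) (hN : K ≤ N) :
    u N + ∑ k ∈ Ico K N, s k ≤ u K := by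
  induction N, hN using Nat.le_induction with
  | base => simp
  | succ N hN ih =>
    rw [sum_Ico_succ_top hN]
    linarith [h N hN]

theorem exists_bound_of_sufficient_decrease {A : ℝ} (hA : 0 < A) (hu : ∀ k, 0 ≤ u k)
    (hs : ∀ k, 0 ≤ s k) (h : ∀ k ≥ K, u (k + 1) + A * s (k + 1) ≤ u k + A / 2 * s k) :
    ∃ S, (∀ N ≥ K, s N ≤ S) ∧ ∀ N ≥ K, ∑ k ∈ Ico K N, s (k + 1) ≤ S := by
  set E : ℕ → ℝ := fun k => u k + A / 2 * s k
  have hdec (N) (hN : K ≤ N) : E N + A / 2 * ∑ k ∈ Ico K N, s (k + 1) ≤ E K := by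
    rw [mul_sum]
    exact add_sum_Ico_le_of_add_le (fun k hk => by simp only [E]; linarith [h k hk]) hN
  have hE (N) : A / 2 * s N ≤ E N := by simp only [E]; linarith [hu N]
  have hsum (N) : 0 ≤ A / 2 * ∑ k ∈ Ico K N, s (k + 1) :=
    mul_nonneg (half_pos hA).le (sum_nonneg fun k _ => hs (k + 1))
  refine ⟨2 / A * E K, fun N hN => ?_, fun N hN => ?_⟩ <;>
    rw [div_mul_eq_mul_div, le_div_iff₀ hA] <;>
    nlinarith [hdec N hN, hE N, hs N, hsum N]

theorem le_exp_mul_of_le_one_add_mul_add {V b e : ℕ → ℝ} {B C : ℝ} (hb : ∀ k, 0 ≤ b k)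
    (he : ∀ k, 0 ≤ e k) (hVK : 0 ≤ V K) (hB : ∀ N ≥ K, ∑ k ∈ Ico K N, b k ≤ B)
    (hC : ∀ N ≥ K, ∑ k ∈ Ico K N, e k ≤ C) (h : ∀ k ≥ K, V (k + 1) ≤ (1 + b k) * V k + e k)
    (hN : K ≤ N) : V N ≤ Real.exp B * (V K + C) := by
  have key : V N ≤ Real.exp (∑ k ∈ Ico K N, b k) * (V K + ∑ k ∈ Ico K N, e k) := by
    induction N, hN using Nat.le_induction with
    | base => simp
    | succ N hN ih =>
      set X := Real.exp (∑ k ∈ Ico K N, b k) * (V K + ∑ k ∈ Ico K N, e k)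
      have hX : 0 ≤ X :=
        mul_nonneg (Real.exp_pos _).le (add_nonneg hVK (sum_nonneg fun k _ => he k))
      have hone : 1 ≤ Real.exp (∑ k ∈ Ico K N, b k) * Real.exp (b N) := by
        rw [← Real.exp_add]
        exact Real.one_le_exp (add_nonneg (sum_nonneg fun k _ => hb k) (hb N))
      rw [sum_Ico_succ_top hN, sum_Ico_succ_top hN, Real.exp_add]
      calc V (N + 1) ≤ (1 + b N) * V N + e N := h N hN
        _ ≤ (1 + b N) * X + e N := by gcongr; linarith [hb N]
        _ ≤ Real.exp (b N) * X + e N := by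
          gcongr; linarith [Real.add_one_le_exp (b N)]
        _ ≤ _ := by nlinarith [he N]
  calc V N ≤ _ := key
    _ ≤ Real.exp B * (V K + C) := by
      gcongr
      · exact add_nonneg hVK (sum_nonneg fun k _ => he k)
      · exact hB N hN
      · exact hC N hN

end RealSequences

section ConvexAnalysis

variable {E : Type*} [NormedAddCommGroup E] [InnerProductSpace ℝ E] {f g : E → ℝ}

theorem ConvexOn.mul_le_add_inner_of_isMinOn_prox (hg : ConvexOn ℝ Set.univ g) {γ : ℝ}
    (hγ : 0 < γ) {w p : E} (hp : IsMinOn (fun z => ‖z - w‖ ^ 2 / (2 * γ) + g z) Set.univ p)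
    (z : E) : γ * g p ≤ γ * g z + ⟪p - w, z - p⟫ := by
  -- compare `p` with `p + t • (z - p)` and let `t → 0`
  refine le_of_forall_le_add_mul (C := ‖z - p‖ ^ 2 / 2) fun t ⟨ht0, ht1⟩ => ?_
  have hmin : ‖p - w‖ ^ 2 / (2 * γ) + g p
      ≤ ‖p - w + t • (z - p)‖ ^ 2 / (2 * γ) + g (p + t • (z - p)) := by
    simpa [add_sub_right_comm] using hp (Set.mem_univ (p + t • (z - p)))
  have hconv : g (p + t • (z - p)) ≤ (1 - t) * g p + t * g z := by
    have := hg.2 (Set.mem_univ p) (Set.mem_univ z) (by linarith : (0 : ℝ) ≤ 1 - t) ht0.le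
      (sub_add_cancel 1 t)
    rwa [smul_eq_mul, smul_eq_mul, ← show p + t • (z - p) = (1 - t) • p + t • z by module] at this
  have hsq : ‖p - w + t • (z - p)‖ ^ 2
      = ‖p - w‖ ^ 2 + 2 * t * ⟪p - w, z - p⟫ + t ^ 2 * ‖z - p‖ ^ 2 := by
    rw [norm_add_sq_real, inner_smul_right, norm_smul, mul_pow, Real.norm_eq_abs, sq_abs]
    ring
  have h2γ : 0 < 2 * γ := by positivity
  rw [hsq, div_add' _ _ _ h2γ.ne', div_add' _ _ _ h2γ.ne', div_le_div_iff_of_pos_right h2γ] at hmin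
  have hstep : t * (2 * γ * (g p - g z)) ≤ t * (2 * ⟪p - w, z - p⟫ + t * ‖z - p‖ ^ 2) := by
    nlinarith
  linarith [le_of_mul_le_mul_left hstep ht0]

variable [CompleteSpace E] {f' : E → E}

theorem HasGradientAt.hasDerivAt_comp_add_smul {a v f'a : E} {t : ℝ}
    (hf : HasGradientAt f f'a (a + t • v)) :
    HasDerivAt (fun s : ℝ => f (a + s • v)) ⟪f'a, v⟫ t := by
  have hline : HasDerivAt (fun s : ℝ => a + s • v) v t := by
    simpa using ((hasDerivAt_id t).smul_const v).const_add a
  have := hf.hasFDerivAt.comp_hasDerivAt t hline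
  simp only [InnerProductSpace.toDual_apply_apply] at this
  exact this

theorem ConvexOn.add_inner_le_of_hasGradientAt (hf : ConvexOn ℝ Set.univ f) {a f'a : E}
    (hf' : HasGradientAt f f'a a) (b : E) : f a + ⟪f'a, b - a⟫ ≤ f b := by
  have hline : ConvexOn ℝ Set.univ (fun t : ℝ => f (a + t • (b - a))) := by
    simpa [Function.comp_def, AffineMap.lineMap_apply, add_comm]
      using hf.comp_affineMap (AffineMap.lineMap a b)
  have := hline.le_slope_of_hasDerivAt (Set.mem_univ 0) (Set.mem_univ 1) zero_lt_one
    (HasGradientAt.hasDerivAt_comp_add_smul (by simpa using hf'))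
  rw [slope_def_field, sub_zero, div_one] at this
  simp only [one_smul, zero_smul, add_zero, add_sub_cancel] at this
  linarith

theorem le_add_inner_add_mul_sq_of_lipschitz_gradient {L : ℝ}
    (hf : ∀ x, HasGradientAt f (f' x) x) (hlip : ∀ x y, ‖f' x - f' y‖ ≤ L * ‖x - y‖) (a b : E) :
    f b ≤ f a + ⟪f' a, b - a⟫ + L / 2 * ‖b - a‖ ^ 2 := by
  set v := b - a
  let χ : ℝ → ℝ := fun t => f (a + t • v) - t * ⟪f' a, v⟫ - L / 2 * ‖v‖ ^ 2 * t ^ 2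
  have hχ (t : ℝ) : HasDerivAt χ (⟪f' (a + t • v) - f' a, v⟫ - L * ‖v‖ ^ 2 * t) t := by
    have := ((HasGradientAt.hasDerivAt_comp_add_smul (a := a) (v := v) (hf _)).sub
      ((hasDerivAt_id t).mul_const ⟪f' a, v⟫)).sub
      (((hasDerivAt_id t).pow 2).const_mul (L / 2 * ‖v‖ ^ 2))
    refine this.congr_deriv ?_
    simp only [inner_sub_left, id]
    ring
  have hanti : AntitoneOn χ (Set.Ici 0) := by
    refine antitoneOn_of_hasDerivWithinAt_nonpos (convex_Ici 0)
      (fun t _ => (hχ t).continuousAt.continuousWithinAt) (fun t _ => (hχ t).hasDerivWithinAt)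
      fun t ht => ?_
    rw [interior_Ici, Set.mem_Ioi] at ht
    have hlipt : ‖f' (a + t • v) - f' a‖ ≤ L * (t * ‖v‖) := by
      simpa [norm_smul, abs_of_pos ht] using hlip (a + t • v) a
    nlinarith [real_inner_le_norm (f' (a + t • v) - f' a) v, norm_nonneg v]
  have hχ0 : χ 0 = f a := by simp [χ]
  have hχ1 : χ 1 = f b - ⟪f' a, b - a⟫ - L / 2 * ‖b - a‖ ^ 2 := by simp [χ, v]
  linarith [hanti Set.self_mem_Ici (Set.mem_Ici.2 zero_le_one) zero_le_one]

end ConvexAnalysis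

section PIGD

variable {E : Type*} [NormedAddCommGroup E] [InnerProductSpace ℝ E]

/-- The one-step inequality of PIGD, for `p = x^{k+1}`, `q = x^k`, `r = x^{k-1}`. -/
def PIGDInequality (F : E → ℝ) (L β γ : ℝ) (p q r : E) : Prop :=
  ∀ z, γ * (F p - F z) ≤ γ * L / 2 * ‖p - q‖ ^ 2 + ⟪p - q, z - p⟫ + β * ⟪q - r, p - z⟫

theorem pigdInequality_of_isMinOn_prox [CompleteSpace E] {f g : E → ℝ} {f' : E → E}
    {L γ β : ℝ} {p q r : E} (hf : ConvexOn ℝ Set.univ f) (hf' : ∀ x, HasGradientAt f (f' x) x)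
    (hlip : ∀ x y, ‖f' x - f' y‖ ≤ L * ‖x - y‖) (hg : ConvexOn ℝ Set.univ g) (hγ : 0 < γ)
    (hp : IsMinOn (fun z => ‖z - (q - γ • f' q + β • (q - r))‖ ^ 2 / (2 * γ) + g z) Set.univ p) :
    PIGDInequality (f + g) L β γ p q r := by
  intro z
  have hprox := hg.mul_le_add_inner_of_isMinOn_prox hγ hp z
  have hdesc := le_add_inner_add_mul_sq_of_lipschitz_gradient hf' hlip q p
  have hconv := hf.add_inner_le_of_hasGradientAt (hf' q) z
  have hpw : p - (q - γ • f' q + β • (q - r)) = (p - q) + γ • f' q - β • (q - r) := by module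
  rw [hpw, inner_sub_left, inner_add_left, inner_smul_left, inner_smul_left] at hprox
  have hsplit : ⟪f' q, p - q⟫ = ⟪f' q, z - q⟫ - ⟪f' q, z - p⟫ := by
    rw [← inner_sub_right, sub_sub_sub_cancel_left]
  have hf_le : f p - f z ≤ L / 2 * ‖p - q‖ ^ 2 - ⟪f' q, z - p⟫ := by linarith
  have hswap : ⟪q - r, z - p⟫ = -⟪q - r, p - z⟫ := by rw [← inner_neg_right, neg_sub]
  simp only [conj_trivial, hswap] at hprox
  simp only [Pi.add_apply]
  linarith [mul_le_mul_of_nonneg_left hf_le hγ.le]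

theorem two_mul_inner_le_norm_sq_add_norm_sq (x y : E) : 2 * ⟪x, y⟫ ≤ ‖x‖ ^ 2 + ‖y‖ ^ 2 := by
  nlinarith [norm_sub_sq_real x y, sq_nonneg ‖x - y‖]

theorem PIGDInequality.sufficient_decrease {F : E → ℝ} {L c β γ : ℝ} {p q r : E}
    (h : PIGDInequality F L β γ p q r) (hL : 0 < L) (hc : 0 < c) (hβ0 : 0 ≤ β)
    (hβ : β ≤ (1 - c) / 2) (hγ : γ * L = 2 * (1 - β) * c) :
    F p + L * (1 - c) / (2 * c) * ‖p - q‖ ^ 2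
      ≤ F q + L * (1 - c) / (2 * c) / 2 * ‖q - r‖ ^ 2 := by
  have hγpos : 0 < γ := pos_of_mul_pos_left (by rw [hγ]; nlinarith) hL.le
  have hγA : γ * (L * (1 - c) / (2 * c)) = (1 - β) * (1 - c) := by
    rw [show γ * (L * (1 - c) / (2 * c)) = γ * L * (1 - c) / (2 * c) by ring, hγ]
    field_simp
  have hγL : γ * L / 2 * ‖p - q‖ ^ 2 = (1 - β) * c * ‖p - q‖ ^ 2 := by rw [hγ]; ring
  have hself : ⟪p - q, q - p⟫ = -‖p - q‖ ^ 2 := by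
    rw [← neg_sub p q, inner_neg_right, real_inner_self_eq_norm_sq]
  have hcs := mul_le_mul_of_nonneg_left
    (two_mul_inner_le_norm_sq_add_norm_sq (q - r) (p - q)) hβ0
  have hβc : 0 ≤ (1 - β) * (1 - c) - β := by nlinarith
  have hq := h q
  refine le_of_mul_le_mul_left ?_ hγpos
  calc γ * (F p + L * (1 - c) / (2 * c) * ‖p - q‖ ^ 2)
      = γ * F p + (1 - β) * (1 - c) * ‖p - q‖ ^ 2 := by rw [← hγA]; ring
    _ ≤ γ * F q + (1 - β) * (1 - c) / 2 * ‖q - r‖ ^ 2 := by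
      nlinarith [mul_nonneg hβc (sq_nonneg ‖q - r‖), mul_nonneg hβ0 (sq_nonneg ‖p - q‖)]
    _ = γ * (F q + L * (1 - c) / (2 * c) / 2 * ‖q - r‖ ^ 2) := by rw [← hγA]; ring

theorem PIGDInequality.fejer_step {F : E → ℝ} {L β γ : ℝ} {p q r xstar : E}
    (h : PIGDInequality F L β γ p q r) (hγ0 : 0 ≤ γ) (hγL : γ * L ≤ 2) (hβ0 : 0 ≤ β)
    (hβ : β ≤ 1 / 2) (hmin : F xstar ≤ F p) :
    ‖p - xstar‖ ^ 2
      ≤ (1 + 2 * β) * ‖q - xstar‖ ^ 2 + 2 * ‖p - q‖ ^ 2 + 2 * β * ‖q - r‖ ^ 2 := by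
  have hpyth : ‖q - xstar‖ ^ 2 = ‖p - q‖ ^ 2 + 2 * ⟪p - q, xstar - p⟫ + ‖p - xstar‖ ^ 2 := by
    rw [← norm_neg (q - xstar), show -(q - xstar) = (p - q) + (xstar - p) by abel,
      norm_add_sq_real, norm_sub_rev xstar p]
  have hcs := mul_le_mul_of_nonneg_left
    (two_mul_inner_le_norm_sq_add_norm_sq (q - r) (p - xstar)) hβ0
  have hγLs := mul_le_mul_of_nonneg_right hγL (sq_nonneg ‖p - q‖)
  have hxstar := h xstar
  have hlin : (1 - β) * ‖p - xstar‖ ^ 2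
      ≤ ‖q - xstar‖ ^ 2 + ‖p - q‖ ^ 2 + β * ‖q - r‖ ^ 2 := by
    nlinarith [mul_nonneg hγ0 (sub_nonneg.2 hmin)]
  have hβ2 : 0 ≤ 1 - 2 * β := by linarith
  nlinarith [mul_nonneg (mul_nonneg hβ0 hβ2) (sq_nonneg ‖p - xstar‖),
    mul_le_mul_of_nonneg_left hlin (by linarith : 0 ≤ 1 + 2 * β),
    mul_nonneg (mul_nonneg hβ0 hβ2) (sq_nonneg ‖q - r‖), sq_nonneg ‖p - q‖]

variable {F : E → ℝ} {x : ℤ → E} {xstar : E} {β γ : ℕ → ℝ} {L c : ℝ} {K : ℕ}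

theorem exists_bound_sq_step_of_pigdInequality (hL : 0 < L) (hc0 : 0 < c) (hc1 : c < 1)
    (hβ0 : ∀ k, 0 ≤ β k) (hβK : ∀ k ≥ K, β k ≤ (1 - c) / 2)
    (hγ : ∀ k, γ k * L = 2 * (1 - β k) * c) (hxstar : ∀ y, F xstar ≤ F y)
    (hstep : ∀ k ≥ K, PIGDInequality F L (β k) (γ k) (x (k + 1)) (x k) (x ((k : ℤ) - 1))) :
    ∃ S, (∀ N ≥ K, ‖x N - x ((N : ℤ) - 1)‖ ^ 2 ≤ S) ∧
      ∀ N ≥ K, ∑ k ∈ Ico K N, ‖x (k + 1) - x k‖ ^ 2 ≤ S := by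
  simpa using exists_bound_of_sufficient_decrease (u := fun k => F (x k) - F xstar)
    (s := fun k => ‖x k - x ((k : ℤ) - 1)‖ ^ 2) (A := L * (1 - c) / (2 * c))
    (by have := sub_pos.2 hc1; positivity) (fun k => sub_nonneg.2 (hxstar _))
    (fun k => sq_nonneg _) fun k hk => by
      have := (hstep k hk).sufficient_decrease hL hc0 (hβ0 k) (hβK k hk) (hγ k)
      push_cast
      simp only [add_sub_cancel_right]
      linarith

theorem exists_bound_dist_sq_of_pigdInequality {S : ℝ} (hβ0 : ∀ k, 0 ≤ β k)
    (hβsum : Summable β) (hβK : ∀ k ≥ K, β k ≤ 1 / 2) (hγ0 : ∀ k ≥ K, 0 ≤ γ k)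
    (hγL : ∀ k ≥ K, γ k * L ≤ 2) (hxstar : ∀ y, F xstar ≤ F y)
    (hstep : ∀ k ≥ K, PIGDInequality F L (β k) (γ k) (x (k + 1)) (x k) (x ((k : ℤ) - 1)))
    (hS : ∀ N ≥ K, ‖x N - x ((N : ℤ) - 1)‖ ^ 2 ≤ S)
    (hsumS : ∀ N ≥ K, ∑ k ∈ Ico K N, ‖x (k + 1) - x k‖ ^ 2 ≤ S) :
    ∃ M, ∀ N ≥ K, ‖x N - xstar‖ ^ 2 ≤ M := by
  have hS0 : 0 ≤ S := (sq_nonneg _).trans (hS K le_rfl)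
  have hβle (N : ℕ) : ∑ k ∈ Ico K N, β k ≤ ∑' k, β k := hβsum.sum_le_tsum _ fun k _ => hβ0 k
  refine ⟨_, fun N hN => le_exp_mul_of_le_one_add_mul_add (V := fun k => ‖x k - xstar‖ ^ 2)
    (b := fun k => 2 * β k) (e := fun k => 2 * ‖x (k + 1) - x k‖ ^ 2 + 2 * S * β k)
    (B := 2 * ∑' k, β k) (C := 2 * S + 2 * S * ∑' k, β k)
    (fun k => by have := hβ0 k; positivity) (fun k => by have := hβ0 k; positivity)
    (sq_nonneg _) (fun N _ => by rw [← mul_sum]; linarith [hβle N]) (fun N hN => ?_)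
    (fun k hk => ?_) hN⟩
  · rw [sum_add_distrib, ← mul_sum, ← mul_sum]
    nlinarith [hβle N, hsumS N hN]
  · have := (hstep k hk).fejer_step (hγ0 k hk) (hγL k hk) (hβ0 k) (hβK k hk) (hxstar _)
    push_cast
    nlinarith [hS k hk, hβ0 k]

theorem exists_norm_le_of_pigdInequality (hL : 0 < L) (hc0 : 0 < c) (hc1 : c < 1)
    (hβ0 : ∀ k, 0 ≤ β k) (hβsum : Summable β) (hγ : ∀ k, γ k * L = 2 * (1 - β k) * c)
    (hxstar : ∀ y, F xstar ≤ F y)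
    (hstep : ∀ k : ℕ, 0 < γ k →
      PIGDInequality F L (β k) (γ k) (x (k + 1)) (x k) (x ((k : ℤ) - 1))) :
    ∃ M, ∀ k : ℕ, ‖x k‖ ≤ M := by
  obtain ⟨K, hK⟩ : ∃ K, ∀ k ≥ K, β k ≤ (1 - c) / 2 :=
    eventually_atTop.1 (hβsum.tendsto_atTop_zero.eventually (ge_mem_nhds (by linarith)))
  have hγpos (k) (hk : K ≤ k) : 0 < γ k :=
    pos_of_mul_pos_left (by rw [hγ]; nlinarith [hK k hk]) hL.le
  have hstepK (k) (hk : K ≤ k) := hstep k (hγpos k hk)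
  obtain ⟨S, hS, hsumS⟩ := exists_bound_sq_step_of_pigdInequality hL hc0 hc1 hβ0 hK hγ hxstar hstepK
  obtain ⟨M, hM⟩ := exists_bound_dist_sq_of_pigdInequality hβ0 hβsum
    (fun k hk => by linarith [hK k hk]) (fun k hk => (hγpos k hk).le)
    (fun k hk => by rw [hγ]; nlinarith [hβ0 k]) hxstar hstepK hS hsumS
  obtain ⟨B, hB⟩ := (isBoundedUnder_of_eventually_le (f := atTop) (u := fun k : ℕ => ‖x k‖)
    (eventually_atTop.2 ⟨K, fun N hN => (norm_le_insert' _ xstar).trans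
      (add_le_add_right (Real.le_sqrt_of_sq_le (hM N hN)) _)⟩)).bddAbove_range
  exact ⟨B, fun k => hB (Set.mem_range_self k)⟩

end PIGD

theorem pigd_stmt4_general
    {n : ℕ} (f g F : EuclideanSpace ℝ (Fin n) → ℝ)
    (f' : EuclideanSpace ℝ (Fin n) → EuclideanSpace ℝ (Fin n))
    (L c : ℝ) (hL : 0 < L) (hc0 : 0 < c) (hc1 : c < 1)
    (hfconv : ConvexOn ℝ Set.univ f)
    (hgconv : ConvexOn ℝ Set.univ g)
    (hf' : ∀ x, HasGradientAt f (f' x) x)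
    (hlip : ∀ x y, ‖f' x - f' y‖ ≤ L * ‖x - y‖)
    (hF : ∀ x, F x = f x + g x)
    (β γ : ℕ → ℝ)
    (hβnonneg : ∀ k, 0 ≤ β k)
    (hγ : ∀ k, γ k = 2 * (1 - β k) * c / L)
    (prox : ℝ → EuclideanSpace ℝ (Fin n) → EuclideanSpace ℝ (Fin n))
    (hprox : ∀ (γ' : ℝ) (y : EuclideanSpace ℝ (Fin n)), 0 < γ' →
      IsMinOn (fun z => ‖z - y‖ ^ 2 / (2 * γ') + g z) Set.univ (prox γ' y))
    (x : ℤ → EuclideanSpace ℝ (Fin n))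
    (hiter : ∀ k : ℕ,
      x (k + 1) = prox (γ k) (x k - γ k • f' (x k) + β k • (x k - x ((k : ℤ) - 1))))
    -- `argmin F` is nonempty and `F xstar = min F`
    (xstar : EuclideanSpace ℝ (Fin n)) (hxstar : ∀ y, F xstar ≤ F y)
    -- inertial parameters `β_k = 1/(k+1)^θ`, `θ > 1`
    (θ : ℝ) (hθ : 1 < θ) (hβ : ∀ k : ℕ, β k = 1 / ((k : ℝ) + 1) ^ θ) :
    ∃ M : ℝ, ∀ k : ℕ, ‖x k‖ ≤ M := by
  obtain rfl : F = f + g := funext hF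
  have hβsum : Summable β :=
    ((summable_nat_add_iff 1).2 (Real.summable_one_div_nat_rpow.2 hθ)).congr fun k => by
      rw [hβ, Nat.cast_add_one]
  refine exists_norm_le_of_pigdInequality (γ := γ) hL hc0 hc1 hβnonneg hβsum
    (fun k => by rw [hγ k]; field_simp) hxstar fun k hγk => ?_
  exact pigdInequality_of_isMinOn_prox hfconv hf' hlip hgconv hγk (hiter k ▸ hprox (γ k) _ hγk)

/-- Lemma 6, boundedness of PIGD iterates with diminishing inertia.
Under the PIGD setup with `argmin F` nonempty and `β_k = 1/(k+1)^θ` for some `θ > 1`,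
the sequence `(xᵏ)` is bounded. -/
theorem pigd_stmt4
    {n : ℕ} (f g F : EuclideanSpace ℝ (Fin n) → ℝ)
    (f' : EuclideanSpace ℝ (Fin n) → EuclideanSpace ℝ (Fin n))
    (L c : ℝ) (hL : 0 < L) (hc0 : 0 < c) (hc1 : c < 1)
    (hfconv : ConvexOn ℝ Set.univ f)
    (hgconv : ConvexOn ℝ Set.univ g)
    (hgcont : Continuous g)
    (hf' : ∀ x, HasGradientAt f (f' x) x)
    (hlip : ∀ x y, ‖f' x - f' y‖ ≤ L * ‖x - y‖)
    (hF : ∀ x, F x = f x + g x)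
    (hFbdd : BddBelow (Set.range F))
    (β γ : ℕ → ℝ)
    (hβnonneg : ∀ k, 0 ≤ β k)
    (hβmono : ∀ k, β (k + 1) ≤ β k)
    (hγ : ∀ k, γ k = 2 * (1 - β k) * c / L)
    (prox : ℝ → EuclideanSpace ℝ (Fin n) → EuclideanSpace ℝ (Fin n))
    (hprox : ∀ (γ' : ℝ) (y : EuclideanSpace ℝ (Fin n)), 0 < γ' →
      IsMinOn (fun z => ‖z - y‖ ^ 2 / (2 * γ') + g z) Set.univ (prox γ' y))
    (x : ℤ → EuclideanSpace ℝ (Fin n))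
    (hiter : ∀ k : ℕ,
      x (k + 1) = prox (γ k) (x k - γ k • f' (x k) + β k • (x k - x ((k : ℤ) - 1))))
    -- `argmin F` is nonempty and `F xstar = min F`
    (xstar : EuclideanSpace ℝ (Fin n)) (hxstar : ∀ y, F xstar ≤ F y)
    -- inertial parameters `β_k = 1/(k+1)^θ`, `θ > 1`
    (θ : ℝ) (hθ : 1 < θ) (hβ : ∀ k : ℕ, β k = 1 / ((k : ℝ) + 1) ^ θ) :
    ∃ M : ℝ, ∀ k : ℕ, ‖x k‖ ≤ M :=
  pigd_stmt4_general f g F f' L c hL hc0 hc1 hfconv hgconv hf' hlip hF β γ hβnonneg hγ prox hprox x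
    hiter xstar hxstar θ hθ hβ
end
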